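/- Let E be a vector lattice and T an orthomorphism of E. Then |Tx| = |T||x| = |T(|x|)| for all x ∈ E. -/

import Mathlib

/-!
For `u, v ≥ 0` the elements `(T u)⁺` and `(T v)⁻` are disjoint. Writing `c = p ⊓ q`, the pieces
`p - c` and `q - c` are disjoint, hence so are their images, and this bounds `(T p)⁺ ⊓ (T q)⁻`
by the supremum of the same expressions for the pairs `(p - c, c)` and `(c, q - c)`. Iterating
`n` times bounds `(T u)⁺ ⊓ (T v)⁻` by `|T z|` for elements `0 ≤ z` with `(n + 1) • z ≤ u + v`,
hence by `(n + 1)⁻¹ • K` for an order bound `K` of `T` on `[0, u + v]`; the Archimedean property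
makes it vanish.

Consequently `x ↦ |T x|` is additive on the positive cone and extends to a positive operator
dominating `T` and `-T`. Minimality of `M` gives `M z = |T z|` for `z ≥ 0`, and since `T x⁺` and
`T x⁻` are disjoint, `|T x| = |T x⁺| + |T x⁻| = |T |x||`.
-/

variable (E : Type*) [AddCommGroup E] [Lattice E] [Module ℝ E]
  [CovariantClass E E (· + ·) (· ≤ ·)] [PosSMulMono ℝ E]

/-- The order on order bounded operators: `A ≤ B` iff `A x ≤ B x` for all `x ≥ 0`. -/
def opLE (A B : E →ₗ[ℝ] E) : Prop := ∀ x : E, 0 ≤ x → A x ≤ B x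

/-- An operator is order bounded when it maps order bounded sets to order bounded sets. -/
def IsOrderBoundedOp (T : E →ₗ[ℝ] E) : Prop :=
  ∀ a b : E, ∃ c d : E, ∀ x : E, a ≤ x → x ≤ b → c ≤ T x ∧ T x ≤ d

/-- Band preserving: `T x` lies in the band generated by `x`; equivalently `T x ⊥ y`
whenever `x ⊥ y`. -/
def IsBandPreserving (T : E →ₗ[ℝ] E) : Prop :=
  ∀ x y : E, |x| ⊓ |y| = 0 → |T x| ⊓ |y| = 0

/-- An orthomorphism is an order bounded band preserving linear operator. -/
def IsOrthomorphism (T : E →ₗ[ℝ] E) : Prop :=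
  IsOrderBoundedOp E T ∧ IsBandPreserving E T

/-- Membership in the band generated by a set `S` (in an Archimedean vector lattice this is
the double disjoint complement of `S`). -/
def memBandGen (S : Set E) (w : E) : Prop :=
  ∀ u : E, (∀ s ∈ S, |u| ⊓ |s| = 0) → |u| ⊓ |w| = 0

/-- `P` is the band projection onto the band `B`: it maps into `B` and `x - P x` is
disjoint from `B` for every `x`. -/
def IsBandProjectionOnto (B : Set E) (P : E →ₗ[ℝ] E) : Prop :=
  (∀ x : E, P x ∈ B) ∧ (∀ x : E, ∀ b ∈ B, |x - P x| ⊓ |b| = 0)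

/-- Order convergence of a net: there is a downward directed set `D` with infimum `0`
such that the net is eventually dominated by every member of `D`. -/
def OrderConvNet {ι : Type*} [Preorder ι] (y : ι → E) (l : E) : Prop :=
  ∃ D : Set E, D.Nonempty ∧ DirectedOn (· ≥ ·) D ∧ IsGLB D 0 ∧
    ∀ d ∈ D, ∃ i₀ : ι, ∀ i : ι, i₀ ≤ i → |y i - l| ≤ d

/-- Unbounded order convergence of a net. -/
def UOConvNet {ι : Type*} [Preorder ι] (y : ι → E) (l : E) : Prop :=
  ∀ u : E, 0 ≤ u → OrderConvNet E (fun i => |y i - l| ⊓ u) 0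

/-- Order convergence of a net of operators, in the operator order of the order bounded
operators: there is a downward directed set `D` of operators whose infimum among the
order bounded operators is `0`, eventually dominating `|T i - L|`. -/
def OpOrderConvNet {ι : Type*} [Preorder ι] (T : ι → E →ₗ[ℝ] E) (L : E →ₗ[ℝ] E) : Prop :=
  ∃ D : Set (E →ₗ[ℝ] E), D.Nonempty ∧
    DirectedOn (fun A B => opLE E B A) D ∧
    (∀ d ∈ D, opLE E 0 d) ∧
    (∀ C : E →ₗ[ℝ] E, IsOrderBoundedOp E C → (∀ d ∈ D, opLE E C d) → opLE E C 0) ∧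
    ∀ d ∈ D, ∃ i₀ : ι, ∀ i : ι, i₀ ≤ i → opLE E (L - T i) d ∧ opLE E (T i - L) d

lemma inf_eq_zero_of_le_of_le {α : Type*} [Lattice α] [Zero α] {a b w x : α} (hw : 0 ≤ w)
    (hx : 0 ≤ x) (hwa : w ≤ a) (hxb : x ≤ b) (h : a ⊓ b = 0) : w ⊓ x = 0 :=
  le_antisymm ((inf_le_inf hwa hxb).trans h.le) (le_inf hw hx)

section LatticeOrderedGroup

variable {G : Type*} [AddCommGroup G] [Lattice G] [AddLeftMono G] {a b p n w x y : G}

lemma posPart_le_abs (a : G) : a⁺ ≤ |a| := sup_le (le_abs_self a) (abs_nonneg a)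

lemma negPart_le_abs (a : G) : a⁻ ≤ |a| := sup_le (neg_le_abs a) (abs_nonneg a)

lemma posPart_add_le (a b : G) : (a + b)⁺ ≤ a⁺ + b⁺ :=
  sup_le (add_le_add (le_posPart a) (le_posPart b))
    (add_nonneg (posPart_nonneg a) (posPart_nonneg b))

lemma add_eq_sup_of_inf_eq_zero (h : a ⊓ b = 0) : a + b = a ⊔ b := by
  rw [← inf_add_sup a b, h, zero_add]

lemma inf_add_le_inf_add_inf {c : G} (ha : 0 ≤ a) (hb : 0 ≤ b) (hc : 0 ≤ c) :
    a ⊓ (b + c) ≤ a ⊓ b + a ⊓ c := by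
  set m := a ⊓ (b + c)
  have hma : m - a ≤ a ⊓ c := (sub_nonpos.2 inf_le_left).trans (le_inf ha hc)
  have hmb : m - b ≤ a ⊓ c :=
    le_inf (sub_le_iff_le_add.2 (inf_le_left.trans (le_add_of_nonneg_right hb)))
      (sub_le_iff_le_add'.2 inf_le_right)
  rw [← sub_le_iff_le_add', sub_inf]
  exact sup_le hma hmb

lemma inf_add_eq_zero {c : G} (ha : 0 ≤ a) (hb : 0 ≤ b) (hc : 0 ≤ c) (hab : a ⊓ b = 0)
    (hac : a ⊓ c = 0) : a ⊓ (b + c) = 0 :=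
  le_antisymm (by simpa [hab, hac] using inf_add_le_inf_add_inf ha hb hc)
    (le_inf ha (add_nonneg hb hc))

lemma le_of_le_add_of_inf_eq_zero (hw : 0 ≤ w) (hx : 0 ≤ x) (hy : 0 ≤ y) (hle : w ≤ x + y)
    (h : w ⊓ x = 0) : w ≤ y :=
  calc w = w ⊓ (x + y) := (inf_eq_left.2 hle).symm
    _ ≤ w ⊓ x + w ⊓ y := inf_add_le_inf_add_inf hw hx hy
    _ = w ⊓ y := by rw [h, zero_add]
    _ ≤ y := inf_le_right

lemma le_posPart_of_le_posPart_add (hw : 0 ≤ w) (hle : w ≤ (x + y)⁺) (h : w ⊓ x⁺ = 0) :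
    w ≤ y⁺ :=
  le_of_le_add_of_inf_eq_zero hw (posPart_nonneg x) (posPart_nonneg y)
    (hle.trans (posPart_add_le x y)) h

lemma le_negPart_of_le_negPart_add (hw : 0 ≤ w) (hle : w ≤ (x + y)⁻) (h : w ⊓ x⁻ = 0) :
    w ≤ y⁻ := by
  rw [← posPart_neg] at hle h ⊢
  rw [neg_add] at hle
  exact le_posPart_of_le_posPart_add hw hle h

lemma posPart_sub_of_inf_eq_zero (h : p ⊓ n = 0) : (p - n)⁺ = p := by
  rw [posPart_def, ← sub_self n, ← sup_sub, ← add_eq_sup_of_inf_eq_zero h, add_sub_cancel_right]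

lemma negPart_sub_of_inf_eq_zero (h : p ⊓ n = 0) : (p - n)⁻ = n := by
  rw [← posPart_neg, neg_sub, posPart_sub_of_inf_eq_zero (by rwa [inf_comm])]

lemma add_posPart_inf_add_negPart_eq_zero (h₁ : a⁺ ⊓ b⁻ = 0) (h₂ : a⁻ ⊓ b⁺ = 0) :
    (a⁺ + b⁺) ⊓ (a⁻ + b⁻) = 0 := by
  have hpos : ∀ c : G, 0 ≤ c⁺ := posPart_nonneg
  have hneg : ∀ c : G, 0 ≤ c⁻ := negPart_nonneg
  rw [inf_comm, inf_add_eq_zero (add_nonneg (hneg a) (hneg b)) (hpos a) (hpos b)]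
  · rw [inf_comm, inf_add_eq_zero (hpos a) (hneg a) (hneg b) (posPart_inf_negPart_eq_zero a) h₁]
  · rw [inf_comm, inf_add_eq_zero (hpos b) (hneg a) (hneg b) (by rwa [inf_comm])
      (posPart_inf_negPart_eq_zero b)]

lemma add_eq_add_posPart_sub_add_negPart (a b : G) : a + b = (a⁺ + b⁺) - (a⁻ + b⁻) :=
  calc a + b = (a⁺ - a⁻) + (b⁺ - b⁻) := by rw [posPart_sub_negPart, posPart_sub_negPart]
    _ = (a⁺ + b⁺) - (a⁻ + b⁻) := by abel

lemma posPart_add_of_inf_eq_zero (h₁ : a⁺ ⊓ b⁻ = 0) (h₂ : a⁻ ⊓ b⁺ = 0) :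
    (a + b)⁺ = a⁺ + b⁺ := by
  rw [add_eq_add_posPart_sub_add_negPart,
    posPart_sub_of_inf_eq_zero (add_posPart_inf_add_negPart_eq_zero h₁ h₂)]

lemma abs_add_of_inf_eq_zero (h₁ : a⁺ ⊓ b⁻ = 0) (h₂ : a⁻ ⊓ b⁺ = 0) : |a + b| = |a| + |b| := by
  have h := add_posPart_inf_add_negPart_eq_zero h₁ h₂
  rw [← posPart_add_negPart (a + b), add_eq_add_posPart_sub_add_negPart a b,
    posPart_sub_of_inf_eq_zero h, negPart_sub_of_inf_eq_zero h, ← posPart_add_negPart a,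
    ← posPart_add_negPart b]
  abel

lemma posPart_inf_negPart_neg_eq_zero (h : |a| ⊓ |b| = 0) :
    a⁺ ⊓ (-b)⁻ = 0 ∧ a⁻ ⊓ (-b)⁺ = 0 := by
  rw [negPart_neg, posPart_neg]
  exact ⟨inf_eq_zero_of_le_of_le (posPart_nonneg a) (posPart_nonneg b) (posPart_le_abs a)
      (posPart_le_abs b) h,
    inf_eq_zero_of_le_of_le (negPart_nonneg a) (negPart_nonneg b) (negPart_le_abs a)
      (negPart_le_abs b) h⟩

lemma posPart_sub_of_abs_inf_abs_eq_zero (h : |a| ⊓ |b| = 0) : (a - b)⁺ = a⁺ + b⁻ := by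
  obtain ⟨h₁, h₂⟩ := posPart_inf_negPart_neg_eq_zero h
  rw [sub_eq_add_neg, posPart_add_of_inf_eq_zero h₁ h₂, posPart_neg]

lemma abs_sub_of_abs_inf_abs_eq_zero (h : |a| ⊓ |b| = 0) : |a - b| = |a| + |b| := by
  obtain ⟨h₁, h₂⟩ := posPart_inf_negPart_neg_eq_zero h
  rw [sub_eq_add_neg, abs_add_of_inf_eq_zero h₁ h₂, abs_neg]

lemma posPart_inf_negPart_le_posPart_sub (a b : G) : a⁺ ⊓ b⁻ ≤ (a - b)⁺ := by
  have hw : 0 ≤ a⁺ ⊓ b⁻ := le_inf (posPart_nonneg a) (negPart_nonneg b)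
  have hs : 0 ≤ a⁻ + b⁺ := add_nonneg (negPart_nonneg a) (posPart_nonneg b)
  refine le_of_le_add_of_inf_eq_zero hw hs (posPart_nonneg _) ?_ ?_
  · calc a⁺ ⊓ b⁻ ≤ a⁺ + b⁻ := inf_le_left.trans (le_add_of_nonneg_right (negPart_nonneg b))
      _ = a⁻ + b⁺ + (a - b) := by
        rw [sub_eq_add_neg, add_eq_add_posPart_sub_add_negPart a (-b), posPart_neg, negPart_neg]
        abel
      _ ≤ a⁻ + b⁺ + (a - b)⁺ := add_le_add_right (le_posPart _) _
  · refine inf_add_eq_zero hw (negPart_nonneg a) (posPart_nonneg b) ?_ ?_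
    · exact inf_eq_zero_of_le_of_le hw (negPart_nonneg a) inf_le_left le_rfl
        (posPart_inf_negPart_eq_zero a)
    · exact inf_eq_zero_of_le_of_le hw (posPart_nonneg b) inf_le_right le_rfl
        (by rw [inf_comm, posPart_inf_negPart_eq_zero b])

end LatticeOrderedGroup

lemma abs_smul_of_nonneg {𝕜 V : Type*} [Field 𝕜] [LinearOrder 𝕜] [IsStrictOrderedRing 𝕜]
    [AddCommGroup V] [Lattice V] [Module 𝕜 V] [PosSMulMono 𝕜 V] {r : 𝕜} (hr : 0 ≤ r) (x : V) :
    |r • x| = r • |x| := by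
  rcases hr.eq_or_lt with rfl | hr
  · simp [abs]
  · rw [abs, abs, ← smul_neg]
    exact ((OrderIso.smulRight hr).map_sup x (-x)).symm

section ExtensionFromPositiveCone

variable {𝕜 V F : Type*} [AddCommGroup V] [Lattice V] [AddCommGroup F] (f : V → F)

lemma map_sub_map_eq_of_sub_eq (hadd : ∀ u v : V, 0 ≤ u → 0 ≤ v → f (u + v) = f u + f v)
    {u v u' v' : V} (hu : 0 ≤ u) (hv : 0 ≤ v) (hu' : 0 ≤ u') (hv' : 0 ≤ v')
    (h : u - v = u' - v') : f u - f v = f u' - f v' := by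
  rw [sub_eq_sub_iff_add_eq_add, ← hadd u v' hu hv', ← hadd u' v hu' hv,
    sub_eq_sub_iff_add_eq_add.1 h]

variable [AddLeftMono V]

lemma map_posPart_sub_map_negPart (hadd : ∀ u v : V, 0 ≤ u → 0 ≤ v → f (u + v) = f u + f v)
    {u v : V} (hu : 0 ≤ u) (hv : 0 ≤ v) : f (u - v)⁺ - f (u - v)⁻ = f u - f v :=
  map_sub_map_eq_of_sub_eq f hadd (posPart_nonneg _) (negPart_nonneg _) hu hv
    (posPart_sub_negPart _)

variable [Field 𝕜] [LinearOrder 𝕜] [IsStrictOrderedRing 𝕜] [Module 𝕜 V] [PosSMulMono 𝕜 V]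
  [Module 𝕜 F]

lemma map_smul_posPart_sub_map_smul_negPart
    (hadd : ∀ u v : V, 0 ≤ u → 0 ≤ v → f (u + v) = f u + f v)
    (hsmul : ∀ (r : 𝕜) (u : V), 0 ≤ r → 0 ≤ u → f (r • u) = r • f u) (r : 𝕜) (x : V) :
    f (r • x)⁺ - f (r • x)⁻ = r • (f x⁺ - f x⁻) := by
  have hp := posPart_nonneg x
  have hn := negPart_nonneg x
  rcases le_total 0 r with hr | hr
  · rw [show r • x = r • x⁺ - r • x⁻ by rw [← smul_sub, posPart_sub_negPart],
      map_posPart_sub_map_negPart f hadd (smul_nonneg hr hp) (smul_nonneg hr hn),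
      hsmul r _ hr hp, hsmul r _ hr hn, smul_sub]
  · have hr' : 0 ≤ -r := neg_nonneg.2 hr
    rw [show r • x = (-r) • x⁻ - (-r) • x⁺ by rw [← smul_sub, neg_smul, ← smul_neg, neg_sub,
        posPart_sub_negPart],
      map_posPart_sub_map_negPart f hadd (smul_nonneg hr' hn) (smul_nonneg hr' hp),
      hsmul _ _ hr' hn, hsmul _ _ hr' hp, ← smul_sub, neg_smul, ← smul_neg, neg_sub]

def LinearMap.ofNonneg (hadd : ∀ u v : V, 0 ≤ u → 0 ≤ v → f (u + v) = f u + f v)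
    (hsmul : ∀ (r : 𝕜) (u : V), 0 ≤ r → 0 ≤ u → f (r • u) = r • f u) : V →ₗ[𝕜] F where
  toFun x := f x⁺ - f x⁻
  map_add' x y := by
    rw [add_eq_add_posPart_sub_add_negPart x y,
      map_posPart_sub_map_negPart f hadd (add_nonneg (posPart_nonneg x) (posPart_nonneg y))
        (add_nonneg (negPart_nonneg x) (negPart_nonneg y)),
      hadd _ _ (posPart_nonneg x) (posPart_nonneg y),
      hadd _ _ (negPart_nonneg x) (negPart_nonneg y)]
    abel
  map_smul' := map_smul_posPart_sub_map_smul_negPart f hadd hsmul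

lemma LinearMap.ofNonneg_apply_of_nonneg
    (hadd : ∀ u v : V, 0 ≤ u → 0 ≤ v → f (u + v) = f u + f v)
    (hsmul : ∀ (r : 𝕜) (u : V), 0 ≤ r → 0 ≤ u → f (r • u) = r • f u) {x : V} (hx : 0 ≤ x) :
    LinearMap.ofNonneg f hadd hsmul x = f x := by
  have hf0 : f 0 = 0 := by simpa using hadd 0 0 le_rfl le_rfl
  change f x⁺ - f x⁻ = f x
  rw [posPart_of_nonneg hx, negPart_of_nonneg hx, hf0, sub_zero]

end ExtensionFromPositiveCone

section Orthomorphism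

variable {V : Type*} [AddCommGroup V] [Lattice V] [Module ℝ V] {T : V →ₗ[ℝ] V}

lemma IsBandPreserving.abs_map_inf_abs_map_eq_zero (hT : IsBandPreserving V T) {x y : V}
    (h : |x| ⊓ |y| = 0) : |T x| ⊓ |T y| = 0 := by
  rw [inf_comm]
  exact hT y (T x) (by rw [inf_comm]; exact hT x y h)

variable [AddLeftMono V]

lemma isOrderBoundedOp_of_map_nonneg {U : V →ₗ[ℝ] V} (hU : ∀ x : V, 0 ≤ x → 0 ≤ U x) :
    IsOrderBoundedOp V U := by
  have hmono : ∀ x y : V, x ≤ y → U x ≤ U y := fun x y hxy =>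
    sub_nonneg.1 (by simpa only [map_sub] using hU (y - x) (sub_nonneg.2 hxy))
  exact fun a b => ⟨U a, U b, fun x hax hxb => ⟨hmono a x hax, hmono x b hxb⟩⟩

lemma IsOrderBoundedOp.exists_abs_le (hT : IsOrderBoundedOp V T) (a b : V) :
    ∃ K : V, ∀ x : V, a ≤ x → x ≤ b → |T x| ≤ K := by
  obtain ⟨c, d, h⟩ := hT a b
  exact ⟨d ⊔ -c, fun x hax hxb => abs_le'.2
    ⟨le_sup_of_le_left (h x hax hxb).2, le_sup_of_le_right (neg_le_neg_iff.2 (h x hax hxb).1)⟩⟩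

lemma IsBandPreserving.posPart_inf_negPart_le_sup (hT : IsBandPreserving V T) (p q : V) :
    (T p)⁺ ⊓ (T q)⁻ ≤
      (T (p - p ⊓ q))⁺ ⊓ (T (p ⊓ q))⁻ ⊔ (T (p ⊓ q))⁺ ⊓ (T (q - p ⊓ q))⁻ := by
  set c := p ⊓ q
  set a := p - c
  set b := q - c
  have ha : 0 ≤ a := sub_nonneg.2 inf_le_left
  have hb : 0 ≤ b := sub_nonneg.2 inf_le_right
  have hab : |T a| ⊓ |T b| = 0 := hT.abs_map_inf_abs_map_eq_zero (x := a) (y := b) <| by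
    rw [abs_of_nonneg ha, abs_of_nonneg hb, ← inf_sub, sub_self]
  have hd : (T a)⁺ ⊓ (T b)⁻ = 0 := inf_eq_zero_of_le_of_le (posPart_nonneg _)
    (negPart_nonneg _) (posPart_le_abs _) (negPart_le_abs _) hab
  set w := (T p)⁺ ⊓ (T q)⁻
  have hw : 0 ≤ w := le_inf (posPart_nonneg _) (negPart_nonneg _)
  have hle : w ≤ (T a)⁺ + (T b)⁻ :=
    calc w ≤ (T p - T q)⁺ := posPart_inf_negPart_le_posPart_sub _ _
      _ = (T a - T b)⁺ := by rw [← map_sub, ← map_sub, sub_sub_sub_cancel_right]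
      _ = (T a)⁺ + (T b)⁻ := posPart_sub_of_abs_inf_abs_eq_zero hab
  have hw₁ : 0 ≤ w ⊓ (T a)⁺ := le_inf hw (posPart_nonneg _)
  have hw₂ : 0 ≤ w ⊓ (T b)⁻ := le_inf hw (negPart_nonneg _)
  have h₁ : w ⊓ (T a)⁺ ≤ (T c)⁻ := by
    refine le_negPart_of_le_negPart_add (x := T b) hw₁ ?_
      (inf_eq_zero_of_le_of_le hw₁ (negPart_nonneg _) inf_le_right le_rfl hd)
    rw [← map_add, sub_add_cancel]
    exact inf_le_left.trans inf_le_right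
  have h₂ : w ⊓ (T b)⁻ ≤ (T c)⁺ := by
    refine le_posPart_of_le_posPart_add (x := T a) hw₂ ?_
      (inf_eq_zero_of_le_of_le hw₂ (posPart_nonneg _) inf_le_right le_rfl (by rwa [inf_comm]))
    rw [← map_add, sub_add_cancel]
    exact inf_le_left.trans inf_le_left
  calc w = w ⊓ ((T a)⁺ + (T b)⁻) := (inf_eq_left.2 hle).symm
    _ ≤ w ⊓ (T a)⁺ + w ⊓ (T b)⁻ :=
      inf_add_le_inf_add_inf hw (posPart_nonneg _) (negPart_nonneg _)
    _ = w ⊓ (T a)⁺ ⊔ w ⊓ (T b)⁻ :=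
      add_eq_sup_of_inf_eq_zero (inf_eq_zero_of_le_of_le hw₁ hw₂ inf_le_right inf_le_right hd)
    _ ≤ _ := sup_le_sup (le_inf inf_le_right h₁) (le_inf h₂ inf_le_right)

lemma IsBandPreserving.posPart_inf_negPart_le (hT : IsBandPreserving V T) (m : ℕ) {p q B : V}
    (hp : 0 ≤ p) (hq : 0 ≤ q)
    (hB : ∀ z : V, 0 ≤ z → z ≤ p ⊓ q → (m + 1) • z ≤ p + q → |T z| ≤ B) :
    (T p)⁺ ⊓ (T q)⁻ ≤ B := by
  induction m generalizing p q with
  | zero =>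
    have hTc : |T (p ⊓ q)| ≤ B := hB _ (le_inf hp hq) le_rfl
      (by simpa using inf_le_left.trans (le_add_of_nonneg_right hq))
    refine (hT.posPart_inf_negPart_le_sup p q).trans (sup_le ?_ ?_)
    · exact inf_le_right.trans ((negPart_le_abs _).trans hTc)
    · exact inf_le_left.trans ((posPart_le_abs _).trans hTc)
  | succ m ih =>
    have hc : 0 ≤ p ⊓ q := le_inf hp hq
    refine (hT.posPart_inf_negPart_le_sup p q).trans (sup_le ?_ ?_)
    · refine ih (sub_nonneg.2 inf_le_left) hc fun z hz hzc hzsum => hB z hz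
        (hzc.trans inf_le_right) ?_
      rw [sub_add_cancel] at hzsum
      calc (m + 1 + 1) • z = (m + 1) • z + z := succ_nsmul z (m + 1)
        _ ≤ p + q := add_le_add hzsum (hzc.trans (inf_le_right.trans inf_le_right))
    · refine ih hc (sub_nonneg.2 inf_le_right) fun z hz hzc hzsum => hB z hz
        (hzc.trans inf_le_left) ?_
      rw [add_sub_cancel] at hzsum
      calc (m + 1 + 1) • z = z + (m + 1) • z := succ_nsmul' z (m + 1)
        _ ≤ p + q := add_le_add (hzc.trans (inf_le_left.trans inf_le_left)) hzsum

variable [PosSMulMono ℝ V]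

theorem IsOrthomorphism.posPart_map_inf_negPart_map_eq_zero
    (harch : ∀ x y : V, (∀ n : ℕ, n • x ≤ y) → x ≤ 0) (hT : IsOrthomorphism V T) {u v : V}
    (hu : 0 ≤ u) (hv : 0 ≤ v) : (T u)⁺ ⊓ (T v)⁻ = 0 := by
  obtain ⟨K, hK⟩ := hT.1.exists_abs_le 0 (u + v)
  have huv : 0 ≤ u + v := add_nonneg hu hv
  refine le_antisymm (harch _ K fun n => ?_) (le_inf (posPart_nonneg _) (negPart_nonneg _))
  rcases n with _ | m
  · simpa using (abs_nonneg _).trans (hK 0 le_rfl huv)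
  · have hm : (0 : ℝ) < m + 1 := by positivity
    rw [← Nat.cast_smul_eq_nsmul ℝ, Nat.cast_succ, ← le_inv_smul_iff_of_pos hm]
    refine hT.2.posPart_inf_negPart_le m hu hv fun z hz _ hzsum => ?_
    rw [le_inv_smul_iff_of_pos hm, ← abs_smul_of_nonneg hm.le, ← map_smul]
    refine hK _ (smul_nonneg hm.le hz) ?_
    rwa [← Nat.cast_succ, Nat.cast_smul_eq_nsmul]

theorem IsOrthomorphism.abs_map_add (harch : ∀ x y : V, (∀ n : ℕ, n • x ≤ y) → x ≤ 0)
    (hT : IsOrthomorphism V T) {u v : V} (hu : 0 ≤ u) (hv : 0 ≤ v) :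
    |T (u + v)| = |T u| + |T v| := by
  rw [map_add]
  refine abs_add_of_inf_eq_zero (hT.posPart_map_inf_negPart_map_eq_zero harch hu hv) ?_
  rw [inf_comm]
  exact hT.posPart_map_inf_negPart_map_eq_zero harch hv hu

theorem IsOrthomorphism.abs_map_abs (harch : ∀ x y : V, (∀ n : ℕ, n • x ≤ y) → x ≤ 0)
    (hT : IsOrthomorphism V T) (x : V) : |T (|x|)| = |T x| := by
  have hdisj : |T x⁺| ⊓ |T x⁻| = 0 := hT.2.abs_map_inf_abs_map_eq_zero <| by
    rw [abs_of_nonneg (posPart_nonneg x), abs_of_nonneg (negPart_nonneg x)]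
    exact posPart_inf_negPart_eq_zero x
  calc |T (|x|)| = |T (x⁺ + x⁻)| := by rw [posPart_add_negPart]
    _ = |T x⁺| + |T x⁻| := hT.abs_map_add harch (posPart_nonneg x) (negPart_nonneg x)
    _ = |T x⁺ - T x⁻| := (abs_sub_of_abs_inf_abs_eq_zero hdisj).symm
    _ = |T x| := by rw [← map_sub, posPart_sub_negPart]

noncomputable def IsOrthomorphism.modulus (harch : ∀ x y : V, (∀ n : ℕ, n • x ≤ y) → x ≤ 0)
    (hT : IsOrthomorphism V T) : V →ₗ[ℝ] V :=
  LinearMap.ofNonneg (fun x => |T x|) (fun _ _ hu hv => hT.abs_map_add harch hu hv)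
    (fun r u hr _ => by rw [map_smul, abs_smul_of_nonneg hr])

theorem IsOrthomorphism.modulus_apply_of_nonneg
    (harch : ∀ x y : V, (∀ n : ℕ, n • x ≤ y) → x ≤ 0) (hT : IsOrthomorphism V T) {x : V}
    (hx : 0 ≤ x) : hT.modulus harch x = |T x| :=
  LinearMap.ofNonneg_apply_of_nonneg _ _ _ hx

end Orthomorphism

theorem stmt6
    (harch : ∀ x y : E, (∀ n : ℕ, n • x ≤ y) → x ≤ 0)
    (T M : E →ₗ[ℝ] E) (hT : IsOrthomorphism E T)
    (hMub : opLE E T M ∧ opLE E (-T) M)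
    (hMlub : ∀ U : E →ₗ[ℝ] E, IsOrderBoundedOp E U → opLE E T U → opLE E (-T) U → opLE E M U) :
    ∀ x : E, |T x| = M (|x|) ∧ M (|x|) = |T (|x|)| := by
  set U := hT.modulus harch
  have hU : ∀ z : E, 0 ≤ z → U z = |T z| := fun _ hz => hT.modulus_apply_of_nonneg harch hz
  have hMU : opLE E M U :=
    hMlub U (isOrderBoundedOp_of_map_nonneg fun x hx => hU x hx ▸ abs_nonneg (T x))
      (fun x hx => hU x hx ▸ le_abs_self (T x)) (fun x hx => hU x hx ▸ neg_le_abs (T x))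
  have hM : ∀ z : E, 0 ≤ z → M z = |T z| := fun z hz =>
    le_antisymm (hU z hz ▸ hMU z hz) (abs_le'.2 ⟨hMub.1 z hz, hMub.2 z hz⟩)
  intro x
  rw [hM _ (abs_nonneg x), hT.abs_map_abs harch x]
  exact ⟨rfl, rfl⟩
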